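/- Let w, W, W̄ be as above with w ≥ 0 continuous. Suppose c₀ ∈ (0,1) and η, η̂ ∈ [0,1] satisfy B_{c₀}(η, η̂) = α ∈ (0, c₀), where B_{c₀}(η,η̂) = |η - c₀|·𝟙[min(η,η̂) < c₀ ≤ max(η,η̂)]. Then the w-weighted regret satisfies B_w(η, η̂) ≥ min( W̄(c₀ - α) + α·W(c₀), W̄(c₀ + α) - α·W(c₀) ) - W̄(c₀), where B_w(η,η̂) = W̄(η) - W̄(η̂) - (η - η̂)·W(η̂). -/

import Mathlib

/-!
`B_w(η, ·)` is the Bregman divergence of the convex function `W̄`; its derivative in the second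
argument is `(v - η) w(v)`, so it decreases as the prediction moves towards `η`. A cost-weighted
regret `α > 0` at `c₀` forces `η = c₀ ± α` with `η̂` on the other side of `c₀`, hence
`B_w(η, η̂) ≥ B_w(η, c₀)`, which is one of the two terms of the minimum.
-/

open Set

noncomputable section

def costRegret (c η ηh : ℝ) : ℝ :=
  |η - c| * if min η ηh < c ∧ c ≤ max η ηh then 1 else 0

def bregmanDiv (F f : ℝ → ℝ) (x y : ℝ) : ℝ :=
  F x - F y - (x - y) * f y

end

lemma costRegret_eq_pos_cases {c α η ηh : ℝ} (hα : 0 < α) (h : costRegret c η ηh = α) :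
    (η = c + α ∧ ηh < c) ∨ (η = c - α ∧ c ≤ ηh) := by
  unfold costRegret at h
  split_ifs at h with hmem
  · obtain ⟨hmin, hmax⟩ := hmem
    rw [min_lt_iff] at hmin
    rw [le_max_iff] at hmax
    rw [mul_one] at h
    rcases (abs_eq hα.le).1 h with h | h
    · exact Or.inl ⟨by linarith, by rcases hmin with h' | h' <;> linarith⟩
    · exact Or.inr ⟨by linarith, by rcases hmax with h' | h' <;> linarith⟩
  · rw [mul_zero] at h
    exact absurd h hα.ne

lemma hasDerivAt_of_forall_eq_intervalIntegral {f F : ℝ → ℝ} {a : ℝ} (hf : Continuous f)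
    (hF : ∀ t, F t = ∫ x in a..t, f x) (t : ℝ) : HasDerivAt F (f t) t := by
  rw [funext hF]
  exact (hf.integral_hasStrictDerivAt a t).hasDerivAt

section BregmanDiv

variable {F f f' : ℝ → ℝ} {a b x : ℝ}

lemma hasDerivAt_bregmanDiv_right {y : ℝ} (hF : HasDerivAt F (f y) y)
    (hf : HasDerivAt f (f' y) y) : HasDerivAt (bregmanDiv F f x) ((y - x) * f' y) y := by
  have h : HasDerivAt (bregmanDiv F f x) (0 - f y - ((0 - 1) * f y + (x - y) * f' y)) y :=
    ((hasDerivAt_const y (F x)).sub hF).sub (((hasDerivAt_const y x).sub (hasDerivAt_id y)).mul hf)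
  exact h.congr_deriv (by ring)

lemma bregmanDiv_antitoneOn (hF : ∀ y ∈ Icc a x, HasDerivAt F (f y) y)
    (hf : ∀ y ∈ Icc a x, HasDerivAt f (f' y) y) (hf' : ∀ y ∈ Icc a x, 0 ≤ f' y) :
    AntitoneOn (bregmanDiv F f x) (Icc a x) := by
  have hD : ∀ y ∈ Icc a x, HasDerivAt (bregmanDiv F f x) ((y - x) * f' y) y :=
    fun y hy => hasDerivAt_bregmanDiv_right (hF y hy) (hf y hy)
  refine antitoneOn_of_hasDerivWithinAt_nonpos (convex_Icc a x) (HasDerivAt.continuousOn hD)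
    (fun y hy => (hD y (interior_subset hy)).hasDerivWithinAt) fun y hy => ?_
  rw [interior_Icc] at hy
  exact mul_nonpos_of_nonpos_of_nonneg (by linarith [hy.2]) (hf' y (Ioo_subset_Icc_self hy))

lemma bregmanDiv_monotoneOn (hF : ∀ y ∈ Icc x b, HasDerivAt F (f y) y)
    (hf : ∀ y ∈ Icc x b, HasDerivAt f (f' y) y) (hf' : ∀ y ∈ Icc x b, 0 ≤ f' y) :
    MonotoneOn (bregmanDiv F f x) (Icc x b) := by
  have hD : ∀ y ∈ Icc x b, HasDerivAt (bregmanDiv F f x) ((y - x) * f' y) y :=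
    fun y hy => hasDerivAt_bregmanDiv_right (hF y hy) (hf y hy)
  refine monotoneOn_of_hasDerivWithinAt_nonneg (convex_Icc x b) (HasDerivAt.continuousOn hD)
    (fun y hy => (hD y (interior_subset hy)).hasDerivWithinAt) fun y hy => ?_
  rw [interior_Icc] at hy
  exact mul_nonneg (by linarith [hy.1]) (hf' y (Ioo_subset_Icc_self hy))

end BregmanDiv

/-- Surrogate regret bound: if the cost-weighted regret at cost `c₀` equals
`α ∈ (0, c₀)`, then the `w`-weighted regret is at least
`min(W̄(c₀-α) + α·W(c₀), W̄(c₀+α) - α·W(c₀)) - W̄(c₀)`. -/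
theorem surrogate_regret_bound (w : ℝ → ℝ) (hw : Continuous w)
    (hw0 : ∀ t ∈ Set.Icc (0:ℝ) 1, 0 ≤ w t) (W Wb : ℝ → ℝ)
    (hW : ∀ t, W t = ∫ x in (0:ℝ)..t, w x)
    (hWb : ∀ t, Wb t = ∫ x in (0:ℝ)..t, W x)
    (c₀ α η ηh : ℝ) (hc₀ : c₀ ∈ Set.Ioo (0:ℝ) 1) (hα : α ∈ Set.Ioo (0:ℝ) c₀)
    (hη : η ∈ Set.Icc (0:ℝ) 1) (hηh : ηh ∈ Set.Icc (0:ℝ) 1)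
    (hB : |η - c₀| * (if min η ηh < c₀ ∧ c₀ ≤ max η ηh then 1 else 0) = α) :
    min (Wb (c₀ - α) + α * W c₀) (Wb (c₀ + α) - α * W c₀) - Wb c₀
      ≤ Wb η - Wb ηh - (η - ηh) * W ηh := by
  have hW' := hasDerivAt_of_forall_eq_intervalIntegral hw hW
  have hWb' := hasDerivAt_of_forall_eq_intervalIntegral
    (continuous_iff_continuousAt.2 fun t => (hW' t).continuousAt) hWb
  rcases costRegret_eq_pos_cases hα.1 hB with ⟨rfl, hηh_lt⟩ | ⟨rfl, hc₀_le⟩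
  · have hanti := bregmanDiv_antitoneOn (a := 0) (fun y _ => hWb' y) (fun y _ => hW' y)
      fun y hy => hw0 y ⟨hy.1, hy.2.trans hη.2⟩
    calc _ ≤ Wb (c₀ + α) - α * W c₀ - Wb c₀ := sub_le_sub_right (min_le_right _ _) _
      _ = bregmanDiv Wb W (c₀ + α) c₀ := by unfold bregmanDiv; ring
      _ ≤ bregmanDiv Wb W (c₀ + α) ηh :=
        hanti ⟨hηh.1, by linarith [hα.1]⟩ ⟨hc₀.1.le, by linarith [hα.1]⟩ hηh_lt.le
  · have hmono := bregmanDiv_monotoneOn (b := 1) (fun y _ => hWb' y) (fun y _ => hW' y)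
      fun y hy => hw0 y ⟨hη.1.trans hy.1, hy.2⟩
    calc _ ≤ Wb (c₀ - α) + α * W c₀ - Wb c₀ := sub_le_sub_right (min_le_left _ _) _
      _ = bregmanDiv Wb W (c₀ - α) c₀ := by unfold bregmanDiv; ring
      _ ≤ bregmanDiv Wb W (c₀ - α) ηh :=
        hmono ⟨by linarith [hα.1], hc₀.2.le⟩ ⟨by linarith [hα.1], hηh.2⟩ hc₀_le
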